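/- Let (M;ρ) be a module over a Lie conformal algebra A, and let μ̂ denote the semidirect product Lie conformal algebra structure on A ⋉_ρ M. A ℂ[∂]-module homomorphism T : M → A is a relative Rota–Baxter operator if and only if its lift T̂ satisfies the Maurer–Cartan equation [T̂,T̂]_{μ̂} = 0 in the graded Lie algebra (C^*(M,A), [·,·]_{μ̂}), where [f₁,f₂]_{μ̂} = (-1)^{m-1}[[μ̂,f̂₁]_NR,f̂₂]_NR for f₁ ∈ C^m(M,A). -/

import Mathlib

/- ------------------------------------------------------------------
Common definitions: λ-polynomials with coefficients in a ℂ[∂]-module,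
Lie conformal algebras, modules, cochain complexes, the
Nijenhuis–Richardson bracket, bidegrees, lifts and twistings.
------------------------------------------------------------------- -/

open scoped Classical

noncomputable section

namespace LCAF

/-- `MP k M` : `M`-valued polynomials in the `k` variables `λ₀, …, λ_{k-1}`,
encoded as finitely supported functions on multi-indices. -/
abbrev MP (k : ℕ) (M : Type*) [AddCommGroup M] : Type _ :=
  (Fin k →₀ ℕ) →₀ M

variable {A B M N A₁ A₂ : Type*}

section PolyOps

variable [AddCommGroup M] [Module ℂ M] [AddCommGroup N] [Module ℂ N]

/-- Apply a linear map to all coefficients of a polynomial. -/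
def mapCoeff {k : ℕ} (g : M →ₗ[ℂ] N) (p : MP k M) : MP k N :=
  p.mapRange g (map_zero g)

/-- Multiplication by the monomial `λ^α`. -/
def monMul {k : ℕ} (α : Fin k →₀ ℕ) (p : MP k M) : MP k M :=
  Finsupp.mapDomain (fun β => α + β) p

/-- The variable `λᵢ` as a scalar polynomial. -/
def Xv {k : ℕ} (i : Fin k) : MP k ℂ :=
  Finsupp.single (Finsupp.single i 1) (1 : ℂ)

/-- Multiplication of an `M`-valued polynomial by a scalar polynomial. -/
def scaleP {k : ℕ} (q : MP k ℂ) (p : MP k M) : MP k M :=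
  q.sum fun α r => r • monMul α p

/-- The operator `q + c∂` acting on `M`-valued polynomials. -/
def opnd {k : ℕ} (D : M →ₗ[ℂ] M) (q : MP k ℂ) (c : ℂ) : MP k M → MP k M :=
  fun p => scaleP q p + c • mapCoeff D p

/-- Substitution: in an `M`-valued polynomial in `k` variables, substitute the
`i`-th variable by the affine expression `q i + (c i)·∂` (with `∂ = D` acting on
coefficients), landing in polynomials in `k'` new variables. -/
def substFun {k k' : ℕ} (D : M →ₗ[ℂ] M) (q : Fin k → MP k' ℂ) (c : Fin k → ℂ)
    (p : MP k M) : MP k' M :=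
  p.sum fun α m =>
    ((List.ofFn fun i : Fin k => (opnd D (q i) (c i))^[α i]).foldr (· ∘ ·) id)
      (Finsupp.single 0 m)

/-- Renaming of variables. -/
def renameV {k k' : ℕ} (h : Fin k → Fin k') (p : MP k M) : MP k' M :=
  Finsupp.mapDomain (fun α => Finsupp.mapDomain h α) p

/-- The substitution `λ ↦ -λ-∂` in one variable. -/
def sub1 (D : M →ₗ[ℂ] M) (p : MP 1 M) : MP 1 M :=
  substFun D (fun _ => -(Xv 0)) (fun _ => -1) p

/-- The multi-index of the single variable `λ` in one variable. -/
def lam1 : Fin 1 →₀ ℕ := Finsupp.single 0 1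

end PolyOps

section Binary

variable [AddCommGroup M] [Module ℂ M]

/-- `F` with its variable substituted by the expression `q + c ∂`, in two
variables `λ = λ₀`, `μ = λ₁`. -/
def opE (D : M →ₗ[ℂ] M) (F : A → B → MP 1 M) (q : MP 2 ℂ) (c : ℂ) (a : A) (b : B) :
    MP 2 M :=
  substFun D (fun _ => q) (fun _ => c) (F a b)

/-- `F` applied with polynomial second argument (extended coefficientwise). -/
def opR [AddCommGroup B] [Module ℂ B] (D : M →ₗ[ℂ] M) (F : A → B → MP 1 M)
    (q : MP 2 ℂ) (c : ℂ) (a : A) (p : MP 2 B) : MP 2 M :=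
  p.sum fun β x => monMul β (opE D F q c a x)

/-- `F` applied with polynomial first argument (extended coefficientwise). -/
def opL [AddCommGroup A] [Module ℂ A] (D : M →ₗ[ℂ] M) (F : A → B → MP 1 M)
    (q : MP 2 ℂ) (c : ℂ) (p : MP 2 A) (b : B) : MP 2 M :=
  p.sum fun β x => monMul β (opE D F q c x b)

end Binary

section LCA

variable [AddCommGroup A] [Module ℂ A] [AddCommGroup M] [Module ℂ M]

/-- `(A, D, br)` is a Lie conformal algebra: `br a b` is `[a_λ b]`, an `A`-valued
polynomial in one variable `λ`. -/
structure IsLCA (D : A →ₗ[ℂ] A) (br : A → A → MP 1 A) : Prop where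
  add_left : ∀ a b c : A, br (a + b) c = br a c + br b c
  smul_left : ∀ (r : ℂ) (a b : A), br (r • a) b = r • br a b
  add_right : ∀ a b c : A, br a (b + c) = br a b + br a c
  smul_right : ∀ (r : ℂ) (a b : A), br a (r • b) = r • br a b
  sesq_left : ∀ a b : A, br (D a) b = -(monMul lam1 (br a b))
  sesq_right : ∀ a b : A, br a (D b) = monMul lam1 (br a b) + mapCoeff D (br a b)
  skew : ∀ a b : A, br a b = -(sub1 D (br b a))
  jacobi : ∀ a b c : A,
    opR D br (Xv 0) 0 a (renameV (fun _ => (1 : Fin 2)) (br b c)) =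
      opL D br (Xv 0 + Xv 1) 0 (renameV (fun _ => (0 : Fin 2)) (br a b)) c +
        opR D br (Xv 1) 0 b (renameV (fun _ => (0 : Fin 2)) (br a c))

/-- `(M, DM, rho)` is a module over the Lie conformal algebra `(A, D, br)`. -/
structure IsLCAMod (D : A →ₗ[ℂ] A) (br : A → A → MP 1 A)
    (DM : M →ₗ[ℂ] M) (rho : A → M → MP 1 M) : Prop where
  add_left : ∀ (a b : A) (m : M), rho (a + b) m = rho a m + rho b m
  smul_left : ∀ (r : ℂ) (a : A) (m : M), rho (r • a) m = r • rho a m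
  add_right : ∀ (a : A) (m n : M), rho a (m + n) = rho a m + rho a n
  smul_right : ∀ (r : ℂ) (a : A) (m : M), rho a (r • m) = r • rho a m
  d_left : ∀ (a : A) (m : M), rho (D a) m = -(monMul lam1 (rho a m))
  d_right : ∀ (a : A) (m : M),
    rho a (DM m) = monMul lam1 (rho a m) + mapCoeff DM (rho a m)
  comm : ∀ (a b : A) (m : M),
    opR DM rho (Xv 0) 0 a (renameV (fun _ => (1 : Fin 2)) (rho b m)) -
      opR DM rho (Xv 1) 0 b (renameV (fun _ => (0 : Fin 2)) (rho a m)) =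
    opL DM rho (Xv 0 + Xv 1) 0 (renameV (fun _ => (0 : Fin 2)) (br a b)) m

/-- `phi` is a 2-cocycle of `(A, D, br)` with coefficients in the module
`(M, DM, rho)`. -/
structure IsTwoCocycle (D : A →ₗ[ℂ] A) (br : A → A → MP 1 A)
    (DM : M →ₗ[ℂ] M) (rho : A → M → MP 1 M) (phi : A → A → MP 1 M) : Prop where
  add_left : ∀ (a b c : A), phi (a + b) c = phi a c + phi b c
  smul_left : ∀ (r : ℂ) (a b : A), phi (r • a) b = r • phi a b
  add_right : ∀ (a b c : A), phi a (b + c) = phi a b + phi a c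
  smul_right : ∀ (r : ℂ) (a b : A), phi a (r • b) = r • phi a b
  sesq_left : ∀ a b : A, phi (D a) b = -(monMul lam1 (phi a b))
  sesq_right : ∀ a b : A, phi a (D b) = monMul lam1 (phi a b) + mapCoeff DM (phi a b)
  skew : ∀ a b : A, phi a b = -(sub1 DM (phi b a))
  cocycle : ∀ a b c : A,
    opR DM rho (Xv 0) 0 a (renameV (fun _ => (1 : Fin 2)) (phi b c))
      - opR DM rho (Xv 1) 0 b (renameV (fun _ => (0 : Fin 2)) (phi a c))
      + opR DM rho (-(Xv 0) - Xv 1) (-1) c (renameV (fun _ => (0 : Fin 2)) (phi a b))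
      + opR DM phi (Xv 0) 0 a (renameV (fun _ => (1 : Fin 2)) (br b c))
      - opR DM phi (Xv 1) 0 b (renameV (fun _ => (0 : Fin 2)) (br a c))
      - opL DM phi (Xv 0 + Xv 1) 0 (renameV (fun _ => (0 : Fin 2)) (br a b)) c = 0

/-- `T : M → A` is a relative Rota–Baxter operator. -/
def IsRB (br : A → A → MP 1 A) (DM : M →ₗ[ℂ] M) (rho : A → M → MP 1 M)
    (T : M →ₗ[ℂ] A) : Prop :=
  ∀ m n : M, br (T m) (T n) = mapCoeff T (rho (T m) n - sub1 DM (rho (T n) m))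

/-- `T : M → A` is a `φ`-twisted relative Rota–Baxter operator. -/
def IsTwistedRB (br : A → A → MP 1 A) (DM : M →ₗ[ℂ] M) (rho : A → M → MP 1 M)
    (phi : A → A → MP 1 M) (T : M →ₗ[ℂ] A) : Prop :=
  ∀ m n : M, br (T m) (T n) =
    mapCoeff T (rho (T m) n - sub1 DM (rho (T n) m) + phi (T m) (T n))

/-- Combine an `A`-valued and an `M`-valued polynomial into an `A × M`-valued one. -/
def pairP {k : ℕ} (p : MP k A) (q : MP k M) : MP k (A × M) :=
  Finsupp.mapRange (fun a => (a, (0 : M))) rfl p +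
    Finsupp.mapRange (fun m => ((0 : A), m)) rfl q

/-- The (φ-twisted) semidirect product λ-bracket on `A × M`. -/
def sdBr (br : A → A → MP 1 A) (DM : M →ₗ[ℂ] M) (rho : A → M → MP 1 M)
    (phi : A → A → MP 1 M) : A × M → A × M → MP 1 (A × M) :=
  fun x y => pairP (br x.1 y.1) (rho x.1 y.2 - sub1 DM (rho y.1 x.2) + phi x.1 y.1)

end LCA

section NS

variable [AddCommGroup A] [Module ℂ A]

/-- The λ-bracket `[a_λ b] = a∘_λ b - b∘_{-λ-∂} a + a∨_λ b` attached to a pair of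
λ-multiplications. -/
def lieNS (D : A →ₗ[ℂ] A) (o v : A → A → MP 1 A) : A → A → MP 1 A :=
  fun a b => o a b - sub1 D (o b a) + v a b

/-- `(A, ∘_λ, ∨_λ)` is an NS-Lie conformal algebra. -/
structure IsNSLie (D : A →ₗ[ℂ] A) (o v : A → A → MP 1 A) : Prop where
  o_add_left : ∀ a b c : A, o (a + b) c = o a c + o b c
  o_smul_left : ∀ (r : ℂ) (a b : A), o (r • a) b = r • o a b
  o_add_right : ∀ a b c : A, o a (b + c) = o a b + o a c
  o_smul_right : ∀ (r : ℂ) (a b : A), o a (r • b) = r • o a b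
  o_sesq_left : ∀ a b : A, o (D a) b = -(monMul lam1 (o a b))
  o_sesq_right : ∀ a b : A, o a (D b) = monMul lam1 (o a b) + mapCoeff D (o a b)
  v_add_left : ∀ a b c : A, v (a + b) c = v a c + v b c
  v_smul_left : ∀ (r : ℂ) (a b : A), v (r • a) b = r • v a b
  v_add_right : ∀ a b c : A, v a (b + c) = v a b + v a c
  v_smul_right : ∀ (r : ℂ) (a b : A), v a (r • b) = r • v a b
  v_sesq_left : ∀ a b : A, v (D a) b = -(monMul lam1 (v a b))
  v_sesq_right : ∀ a b : A, v a (D b) = monMul lam1 (v a b) + mapCoeff D (v a b)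
  v_skew : ∀ a b : A, v a b = -(sub1 D (v b a))
  ns1 : ∀ a b c : A,
    opL D o (Xv 0 + Xv 1) 0 (renameV (fun _ => (0 : Fin 2)) (o a b)) c
      - opR D o (Xv 0) 0 a (renameV (fun _ => (1 : Fin 2)) (o b c))
      - opL D o (Xv 0 + Xv 1) 0 (renameV (fun _ => (1 : Fin 2)) (o b a)) c
      + opR D o (Xv 1) 0 b (renameV (fun _ => (0 : Fin 2)) (o a c))
      + opL D o (Xv 0 + Xv 1) 0 (renameV (fun _ => (0 : Fin 2)) (v a b)) c = 0
  ns2 : ∀ a b c : A,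
    opR D v (Xv 0) 0 a (renameV (fun _ => (1 : Fin 2)) (lieNS D o v b c))
      - opL D v (Xv 0 + Xv 1) 0 (renameV (fun _ => (0 : Fin 2)) (lieNS D o v a b)) c
      - opR D v (Xv 1) 0 b (renameV (fun _ => (0 : Fin 2)) (lieNS D o v a c))
      + opR D o (Xv 0) 0 a (renameV (fun _ => (1 : Fin 2)) (v b c))
      - opR D o (Xv 1) 0 b (renameV (fun _ => (0 : Fin 2)) (v a c))
      + opR D o (-(Xv 0) - Xv 1) (-1) c (renameV (fun _ => (0 : Fin 2)) (v a b)) = 0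

/-- `(A, ≻_λ, ≺_λ, ⋎_λ)` is a conformal NS-algebra. -/
structure IsConfNS (D : A →ₗ[ℂ] A) (su pr cu : A → A → MP 1 A) : Prop where
  su_add_left : ∀ a b c : A, su (a + b) c = su a c + su b c
  su_smul_left : ∀ (r : ℂ) (a b : A), su (r • a) b = r • su a b
  su_add_right : ∀ a b c : A, su a (b + c) = su a b + su a c
  su_smul_right : ∀ (r : ℂ) (a b : A), su a (r • b) = r • su a b
  su_sesq_left : ∀ a b : A, su (D a) b = -(monMul lam1 (su a b))
  su_sesq_right : ∀ a b : A, su a (D b) = monMul lam1 (su a b) + mapCoeff D (su a b)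
  pr_add_left : ∀ a b c : A, pr (a + b) c = pr a c + pr b c
  pr_smul_left : ∀ (r : ℂ) (a b : A), pr (r • a) b = r • pr a b
  pr_add_right : ∀ a b c : A, pr a (b + c) = pr a b + pr a c
  pr_smul_right : ∀ (r : ℂ) (a b : A), pr a (r • b) = r • pr a b
  pr_sesq_left : ∀ a b : A, pr (D a) b = -(monMul lam1 (pr a b))
  pr_sesq_right : ∀ a b : A, pr a (D b) = monMul lam1 (pr a b) + mapCoeff D (pr a b)
  cu_add_left : ∀ a b c : A, cu (a + b) c = cu a c + cu b c
  cu_smul_left : ∀ (r : ℂ) (a b : A), cu (r • a) b = r • cu a b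
  cu_add_right : ∀ a b c : A, cu a (b + c) = cu a b + cu a c
  cu_smul_right : ∀ (r : ℂ) (a b : A), cu a (r • b) = r • cu a b
  cu_sesq_left : ∀ a b : A, cu (D a) b = -(monMul lam1 (cu a b))
  cu_sesq_right : ∀ a b : A, cu a (D b) = monMul lam1 (cu a b) + mapCoeff D (cu a b)
  ax1 : ∀ x y z : A,
    opR D su (Xv 0) 0 x (renameV (fun _ => (1 : Fin 2)) (su y z)) =
      opL D su (Xv 0 + Xv 1) 0
        (renameV (fun _ => (0 : Fin 2)) (su x y + pr x y + cu x y)) z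
  ax2 : ∀ x y z : A,
    opR D pr (Xv 0) 0 x (renameV (fun _ => (1 : Fin 2)) (su y z + pr y z + cu y z)) =
      opL D pr (Xv 0 + Xv 1) 0 (renameV (fun _ => (0 : Fin 2)) (pr x y)) z
  ax3 : ∀ x y z : A,
    opR D su (Xv 0) 0 x (renameV (fun _ => (1 : Fin 2)) (pr y z)) =
      opL D pr (Xv 0 + Xv 1) 0 (renameV (fun _ => (0 : Fin 2)) (su x y)) z
  ax4 : ∀ x y z : A,
    opR D su (Xv 0) 0 x (renameV (fun _ => (1 : Fin 2)) (cu y z)) -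
        opL D cu (Xv 0 + Xv 1) 0
          (renameV (fun _ => (0 : Fin 2)) (su x y + pr x y + cu x y)) z =
      opL D pr (Xv 0 + Xv 1) 0 (renameV (fun _ => (0 : Fin 2)) (cu x y)) z -
        opR D cu (Xv 0) 0 x (renameV (fun _ => (1 : Fin 2)) (su y z + pr y z + cu y z))

/-- `N` is a Nijenhuis operator on the Lie conformal algebra `(A, D, br)`. -/
def IsNijenhuis (D : A →ₗ[ℂ] A) (br : A → A → MP 1 A) (N : A →ₗ[ℂ] A) : Prop :=
  (∀ a : A, N (D a) = D (N a)) ∧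
  ∀ a b : A, br (N a) (N b) =
    mapCoeff N (br (N a) b + br a (N b) - mapCoeff N (br a b))

/-- The deformed bracket `[a_λ b]_N`. -/
def deformBr (br : A → A → MP 1 A) (N : A →ₗ[ℂ] A) : A → A → MP 1 A :=
  fun a b => br (N a) b + br a (N b) - mapCoeff N (br a b)

end NS

/- ------------------------  cochains  ------------------------ -/

/-- `RawC n A M` : the underlying maps of cochains in `C^{n+1}(A, M)`:
`n+1` arguments from `A`, values in `M`-valued polynomials in `n` variables. -/
abbrev RawC (n : ℕ) (A : Type*) (M : Type*) [AddCommGroup M] : Type _ :=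
  (Fin (n + 1) → A) → MP n M

section CochainDefs

variable [AddCommGroup A] [Module ℂ A] [AddCommGroup M] [Module ℂ M]

/-- The scalar-polynomial part of the expression for `λ_t`, where the last
variable is replaced by `λ† = -λ₀ - ⋯ - λ_{N-1} - ∂`. -/
def exprQ {N : ℕ} (t : Fin (N + 1)) : MP N ℂ :=
  if h : t = Fin.last N then -(∑ i : Fin N, Xv i) else Xv (t.castPred h)

/-- The `∂`-coefficient of the expression for `λ_t`. -/
def exprC {N : ℕ} (t : Fin (N + 1)) : ℂ :=
  if t = Fin.last N then -1 else 0

/-- `f` is a cochain in `C^{n+1}(A, M)` (conformal sesquilinearity, multilinearity,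
and skew-symmetry with the substitution `λ_{last} ↦ λ†`). -/
structure IsCochain {n : ℕ} (DA : A →ₗ[ℂ] A) (DM : M →ₗ[ℂ] M) (f : RawC n A M) :
    Prop where
  map_add : ∀ (a : Fin (n + 1) → A) (i : Fin (n + 1)) (x y : A),
    f (Function.update a i (x + y)) =
      f (Function.update a i x) + f (Function.update a i y)
  map_smul : ∀ (a : Fin (n + 1) → A) (i : Fin (n + 1)) (r : ℂ) (x : A),
    f (Function.update a i (r • x)) = r • f (Function.update a i x)
  sesq : ∀ (a : Fin (n + 1) → A) (i : Fin n),
    f (Function.update a i.castSucc (DA (a i.castSucc))) =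
      -(monMul (Finsupp.single i 1) (f a))
  sesq_last : ∀ a : Fin (n + 1) → A,
    f (Function.update a (Fin.last n) (DA (a (Fin.last n)))) =
      (∑ i : Fin n, monMul (Finsupp.single i 1) (f a)) + mapCoeff DM (f a)
  skew : ∀ (σ : Equiv.Perm (Fin (n + 1))) (a : Fin (n + 1) → A),
    f a = ((Equiv.Perm.sign σ : ℤˣ) : ℤ) •
      substFun DM (fun j : Fin n => exprQ (σ j.castSucc))
        (fun j : Fin n => exprC (σ j.castSucc)) (f (a ∘ σ))

/-- `(t, N-t)`-unshuffles : permutations strictly increasing on the first `t`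
positions and on the remaining positions. -/
def IsUnsh {N : ℕ} (t : ℕ) (σ : Equiv.Perm (Fin N)) : Prop :=
  ∀ i j : Fin N, i < j → (j.val < t ∨ t ≤ i.val) → σ i < σ j

/-- The `⋄`-product (unshuffle-sum insertion) of cochains:
`f ∈ C^{p+1}(A,A)`, `g ∈ C^{q+1}(A,A)`, `f⋄g ∈ C^{p+q+1}(A,A)`. -/
def diamond {p q : ℕ} (DA : A →ₗ[ℂ] A) (f : RawC p A A) (g : RawC q A A) :
    RawC (p + q) A A := fun a =>
  ∑ σ ∈ Finset.univ.filter (fun σ : Equiv.Perm (Fin (p + q + 1)) => IsUnsh (q + 1) σ),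
    ((Equiv.Perm.sign σ : ℤˣ) : ℤ) •
      substFun DA
        (fun v : Fin (p + q) =>
          if v.val = q then
            ∑ i : Fin (q + 1), exprQ (σ (Fin.castLE (by omega) i))
          else exprQ (σ v.castSucc))
        (fun v : Fin (p + q) =>
          if v.val = q then
            ∑ i : Fin (q + 1), exprC (σ (Fin.castLE (by omega) i))
          else exprC (σ v.castSucc))
        ((g fun i : Fin (q + 1) => a (σ (Fin.castLE (by omega) i))).sum fun β x =>
          monMul
            (Finsupp.mapDomain
              (fun i : Fin q => (Fin.cast (by omega) (Fin.castAdd p i) : Fin (p + q))) β)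
            (renameV (fun j : Fin p => (Fin.cast (by omega) (Fin.natAdd q j) : Fin (p + q)))
              (f (Fin.cons x fun j : Fin p =>
                a (σ (Fin.cast (by omega) (Fin.natAdd (q + 1) j)))))))

/-- Transport a raw cochain along an equality of degrees. -/
def castRaw {m n : ℕ} (h : m = n) (f : RawC m A M) : RawC n A M := h ▸ f

/-- The Nijenhuis–Richardson bracket `[f,g] = f⋄g - (-1)^{pq} g⋄f`. -/
def nr {p q : ℕ} (DA : A →ₗ[ℂ] A) (f : RawC p A A) (g : RawC q A A) :
    RawC (p + q) A A :=
  diamond DA f g - ((-1 : ℤ)) ^ (p * q) • castRaw (Nat.add_comm q p) (diamond DA g f)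

end CochainDefs

section Bidegree

variable [AddCommGroup A₁] [Module ℂ A₁] [AddCommGroup A₂] [Module ℂ A₂]

/-- `x` is a pure element: in `A₁` (if `b`) or in `A₂` (if `¬b`). -/
def IsPure (x : A₁ × A₂) (b : Bool) : Prop :=
  if b then x.2 = 0 else x.1 = 0

/-- `f ∈ C^{n+1}(A₁⊕A₂, A₁⊕A₂)` has bidegree `k|l`. -/
def HasBidegree {n : ℕ} (f : RawC n (A₁ × A₂) (A₁ × A₂)) (k l : ℤ) : Prop :=
  k + l = (n : ℤ) ∧
  ∀ (P : Fin (n + 1) → Bool) (a : Fin (n + 1) → A₁ × A₂),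
    (∀ i, IsPure (a i) (P i)) →
    ((((Finset.univ.filter fun i => P i = true).card : ℤ) = k + 1 →
        ∀ β, ((f a) β).2 = 0) ∧
      ((((Finset.univ.filter fun i => P i = true).card : ℤ) = k) →
        ∀ β, ((f a) β).1 = 0) ∧
      (((((Finset.univ.filter fun i => P i = true).card : ℤ) ≠ k + 1) ∧
        (((Finset.univ.filter fun i => P i = true).card : ℤ) ≠ k)) → f a = 0))

/-- The lift of `f ∈ C^{n+1}(A₂, A₁)` to a cochain on `A₁ ⊕ A₂`. -/
def liftC {n : ℕ} (f : RawC n A₂ A₁) : RawC n (A₁ × A₂) (A₁ × A₂) :=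
  fun x => Finsupp.mapRange (fun a => (a, (0 : A₂))) rfl (f fun i => (x i).2)

/-- Recover `f ∈ C^{n+1}(A₂, A₁)` from (a lift of) a cochain on `A₁ ⊕ A₂`. -/
def downC {n : ℕ} (g : RawC n (A₁ × A₂) (A₁ × A₂)) : RawC n A₂ A₁ :=
  fun v => Finsupp.mapRange Prod.fst rfl (g fun i => ((0 : A₁), v i))

/-- The lift of a `ℂ[∂]`-module homomorphism `H : A₂ → A₁` as a `1`-cochain on
`A₁ ⊕ A₂`. -/
def hatHom (H : A₂ →ₗ[ℂ] A₁) : RawC 0 (A₁ × A₂) (A₁ × A₂) :=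
  fun x => Finsupp.single 0 (H ((x 0).2), (0 : A₂))

/-- `H : A₂ → A₁` viewed as an element of `C^1(A₂, A₁)`. -/
def hatC1 (H : A₂ →ₗ[ℂ] A₁) : RawC 0 A₂ A₁ :=
  fun v => Finsupp.single 0 (H (v 0))

/-- The structure map of a λ-bracket as a 2-cochain. -/
def toC2 {A : Type*} [AddCommGroup A] (br : A → A → MP 1 A) : RawC 1 A A :=
  fun a => br (a 0) (a 1)

/-- `l₁ = d_{μ̂₂}` on `C^*(A₂, A₁)`. -/
def ell1 (DA : (A₁ × A₂) →ₗ[ℂ] (A₁ × A₂)) (mu2 : RawC 1 (A₁ × A₂) (A₁ × A₂))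
    {n : ℕ} (f : RawC n A₂ A₁) : RawC (n + 1) A₂ A₁ :=
  downC (castRaw (show 1 + n = n + 1 by omega) (nr DA mu2 (liftC f)))

/-- `l₂ = [·,·]_{μ̂₁}` on `C^*(A₂, A₁)`. -/
def ell2 (DA : (A₁ × A₂) →ₗ[ℂ] (A₁ × A₂)) (mu1 : RawC 1 (A₁ × A₂) (A₁ × A₂))
    {m n : ℕ} (f : RawC m A₂ A₁) (g : RawC n A₂ A₁) : RawC (m + n + 1) A₂ A₁ :=
  ((-1 : ℤ)) ^ m •
    downC (castRaw (show 1 + m + n = m + n + 1 by omega)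
      (nr DA (nr DA mu1 (liftC f)) (liftC g)))

/-- `l₃ = [·,·,·]_{φ̂₁}` on `C^*(A₂, A₁)`. -/
def ell3 (DA : (A₁ × A₂) →ₗ[ℂ] (A₁ × A₂)) (phi1 : RawC 1 (A₁ × A₂) (A₁ × A₂))
    {m n k : ℕ} (f : RawC m A₂ A₁) (g : RawC n A₂ A₁) (h : RawC k A₂ A₁) :
    RawC (m + n + k + 1) A₂ A₁ :=
  ((-1 : ℤ)) ^ n •
    downC (castRaw (show 1 + m + n + k = m + n + k + 1 by omega)
      (nr DA (nr DA (nr DA phi1 (liftC f)) (liftC g)) (liftC h)))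

/-- `Π` is a twilled Lie conformal algebra structure on `A₁ ⊕ A₂`. -/
def IsTwilledStr (DA : (A₁ × A₂) →ₗ[ℂ] (A₁ × A₂))
    (Pi : RawC 1 (A₁ × A₂) (A₁ × A₂)) : Prop :=
  IsCochain DA DA Pi ∧ nr DA Pi Pi = 0 ∧
    ∃ m1 m2 : RawC 1 (A₁ × A₂) (A₁ × A₂),
      HasBidegree m1 1 0 ∧ HasBidegree m2 0 1 ∧ Pi = m1 + m2

/-- `Π` is a quasi-twilled Lie conformal algebra structure on `A₁ ⊕ A₂`. -/
def IsQuasiTwilledStr (DA : (A₁ × A₂) →ₗ[ℂ] (A₁ × A₂))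
    (Pi : RawC 1 (A₁ × A₂) (A₁ × A₂)) : Prop :=
  IsCochain DA DA Pi ∧ nr DA Pi Pi = 0 ∧
    ∃ p1 m1 m2 : RawC 1 (A₁ × A₂) (A₁ × A₂),
      HasBidegree p1 2 (-1) ∧ HasBidegree m1 1 0 ∧ HasBidegree m2 0 1 ∧
        Pi = p1 + m1 + m2

end Bidegree

section Twist

variable [AddCommGroup A] [Module ℂ A]

/-- The twisting `Π^H = e^{X_Ĥ}(Π)` of a `2`-cochain by (the lift of) a
`ℂ[∂]`-module homomorphism. -/
def twist (DA : A →ₗ[ℂ] A) (Pi : RawC 1 A A) (hH : RawC 0 A A) : RawC 1 A A :=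
  Pi + nr DA Pi hH + (2 : ℂ)⁻¹ • nr DA (nr DA Pi hH) hH
    + (6 : ℂ)⁻¹ • nr DA (nr DA (nr DA Pi hH) hH) hH

end Twist

end LCAF

namespace LCAF

section GradedStructures

variable {A₁ A₂ : Type*} [AddCommGroup A₁] [Module ℂ A₁] [AddCommGroup A₂] [Module ℂ A₂]

/-- The subspace of `⊕ₙ RawC n A₂ A₁` cut out by `P` (placing `RawC n` in degree
`n+1`), equipped with `d` and `br`, is a differential graded Lie algebra. -/
structure IsDGLAOn
    (P : ∀ {n : ℕ}, RawC n A₂ A₁ → Prop)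
    (d : ∀ {n : ℕ}, RawC n A₂ A₁ → RawC (n + 1) A₂ A₁)
    (br : ∀ {m n : ℕ}, RawC m A₂ A₁ → RawC n A₂ A₁ → RawC (m + n + 1) A₂ A₁) :
    Prop where
  mem_zero : ∀ {n : ℕ}, P (0 : RawC n A₂ A₁)
  mem_add : ∀ {n : ℕ} (f g : RawC n A₂ A₁), P f → P g → P (f + g)
  mem_smul : ∀ {n : ℕ} (r : ℂ) (f : RawC n A₂ A₁), P f → P (r • f)
  mem_d : ∀ {n : ℕ} (f : RawC n A₂ A₁), P f → P (d f)
  mem_br : ∀ {m n : ℕ} (f : RawC m A₂ A₁) (g : RawC n A₂ A₁), P f → P g → P (br f g)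
  d_add : ∀ {n : ℕ} (f g : RawC n A₂ A₁), P f → P g → d (f + g) = d f + d g
  d_smul : ∀ {n : ℕ} (r : ℂ) (f : RawC n A₂ A₁), P f → d (r • f) = r • d f
  br_add_left : ∀ {m n : ℕ} (f f' : RawC m A₂ A₁) (g : RawC n A₂ A₁),
    P f → P f' → P g → br (f + f') g = br f g + br f' g
  br_smul_left : ∀ {m n : ℕ} (r : ℂ) (f : RawC m A₂ A₁) (g : RawC n A₂ A₁),
    P f → P g → br (r • f) g = r • br f g
  br_add_right : ∀ {m n : ℕ} (f : RawC m A₂ A₁) (g g' : RawC n A₂ A₁),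
    P f → P g → P g' → br f (g + g') = br f g + br f g'
  br_smul_right : ∀ {m n : ℕ} (r : ℂ) (f : RawC m A₂ A₁) (g : RawC n A₂ A₁),
    P f → P g → br f (r • g) = r • br f g
  d_squared : ∀ {n : ℕ} (f : RawC n A₂ A₁), P f → d (d f) = 0
  skew : ∀ {m n : ℕ} (f : RawC m A₂ A₁) (g : RawC n A₂ A₁), P f → P g →
    br f g = ((-1 : ℤ)) ^ ((m + 1) * (n + 1) + 1) •
      castRaw (show n + m + 1 = m + n + 1 by omega) (br g f)
  leibniz : ∀ {m n : ℕ} (f : RawC m A₂ A₁) (g : RawC n A₂ A₁), P f → P g →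
    castRaw (show m + n + 1 + 1 = m + n + 2 by omega) (d (br f g)) =
      castRaw (show m + 1 + n + 1 = m + n + 2 by omega) (br (d f) g) +
      ((-1 : ℤ)) ^ (m + 1) •
        castRaw (show m + (n + 1) + 1 = m + n + 2 by omega) (br f (d g))
  jacobi : ∀ {m n k : ℕ} (f : RawC m A₂ A₁) (g : RawC n A₂ A₁) (h : RawC k A₂ A₁),
    P f → P g → P h →
    castRaw (show m + (n + k + 1) + 1 = m + n + k + 2 by omega) (br f (br g h)) =
      castRaw (show m + n + 1 + k + 1 = m + n + k + 2 by omega) (br (br f g) h) +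
      ((-1 : ℤ)) ^ ((m + 1) * (n + 1)) •
        castRaw (show n + (m + k + 1) + 1 = m + n + k + 2 by omega) (br g (br f h))

/-- The subspace of `⊕ₙ RawC n A₂ A₁` cut out by `P` (placing `RawC n` in degree
`n+1`), with operations `l₁, l₂, l₃` (and `lᵢ = 0` for `i ≥ 4`), is an
`L∞`-algebra: graded skew-symmetry and the higher Jacobi identities
`∑_{i+j=n+1} (-1)^i ∑_{σ ∈ Sh(i,n-i)} χ(σ) l_j(l_i(x_{σ(1)},…),…) = 0`
(only `n = 1, …, 5` are nontrivial since `lᵢ = 0` for `i ≥ 4`). -/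
structure IsLInftyOn
    (P : ∀ {n : ℕ}, RawC n A₂ A₁ → Prop)
    (l1 : ∀ {n : ℕ}, RawC n A₂ A₁ → RawC (n + 1) A₂ A₁)
    (l2 : ∀ {m n : ℕ}, RawC m A₂ A₁ → RawC n A₂ A₁ → RawC (m + n + 1) A₂ A₁)
    (l3 : ∀ {m n k : ℕ}, RawC m A₂ A₁ → RawC n A₂ A₁ → RawC k A₂ A₁ →
      RawC (m + n + k + 1) A₂ A₁) : Prop where
  mem_zero : ∀ {n : ℕ}, P (0 : RawC n A₂ A₁)
  mem_add : ∀ {n : ℕ} (f g : RawC n A₂ A₁), P f → P g → P (f + g)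
  mem_smul : ∀ {n : ℕ} (r : ℂ) (f : RawC n A₂ A₁), P f → P (r • f)
  mem_l1 : ∀ {n : ℕ} (f : RawC n A₂ A₁), P f → P (l1 f)
  mem_l2 : ∀ {m n : ℕ} (f : RawC m A₂ A₁) (g : RawC n A₂ A₁), P f → P g → P (l2 f g)
  mem_l3 : ∀ {m n k : ℕ} (f : RawC m A₂ A₁) (g : RawC n A₂ A₁) (h : RawC k A₂ A₁),
    P f → P g → P h → P (l3 f g h)
  l1_add : ∀ {n : ℕ} (f g : RawC n A₂ A₁), P f → P g → l1 (f + g) = l1 f + l1 g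
  l1_smul : ∀ {n : ℕ} (r : ℂ) (f : RawC n A₂ A₁), P f → l1 (r • f) = r • l1 f
  l2_add_left : ∀ {m n : ℕ} (f f' : RawC m A₂ A₁) (g : RawC n A₂ A₁),
    P f → P f' → P g → l2 (f + f') g = l2 f g + l2 f' g
  l2_smul_left : ∀ {m n : ℕ} (r : ℂ) (f : RawC m A₂ A₁) (g : RawC n A₂ A₁),
    P f → P g → l2 (r • f) g = r • l2 f g
  l2_add_right : ∀ {m n : ℕ} (f : RawC m A₂ A₁) (g g' : RawC n A₂ A₁),
    P f → P g → P g' → l2 f (g + g') = l2 f g + l2 f g'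
  l2_smul_right : ∀ {m n : ℕ} (r : ℂ) (f : RawC m A₂ A₁) (g : RawC n A₂ A₁),
    P f → P g → l2 f (r • g) = r • l2 f g
  l3_add₁ : ∀ {m n k : ℕ} (f f' : RawC m A₂ A₁) (g : RawC n A₂ A₁) (h : RawC k A₂ A₁),
    P f → P f' → P g → P h → l3 (f + f') g h = l3 f g h + l3 f' g h
  l3_smul₁ : ∀ {m n k : ℕ} (r : ℂ) (f : RawC m A₂ A₁) (g : RawC n A₂ A₁)
    (h : RawC k A₂ A₁), P f → P g → P h → l3 (r • f) g h = r • l3 f g h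
  l3_add₂ : ∀ {m n k : ℕ} (f : RawC m A₂ A₁) (g g' : RawC n A₂ A₁) (h : RawC k A₂ A₁),
    P f → P g → P g' → P h → l3 f (g + g') h = l3 f g h + l3 f g' h
  l3_smul₂ : ∀ {m n k : ℕ} (r : ℂ) (f : RawC m A₂ A₁) (g : RawC n A₂ A₁)
    (h : RawC k A₂ A₁), P f → P g → P h → l3 f (r • g) h = r • l3 f g h
  l3_add₃ : ∀ {m n k : ℕ} (f : RawC m A₂ A₁) (g : RawC n A₂ A₁) (h h' : RawC k A₂ A₁),
    P f → P g → P h → P h' → l3 f g (h + h') = l3 f g h + l3 f g h'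
  l3_smul₃ : ∀ {m n k : ℕ} (r : ℂ) (f : RawC m A₂ A₁) (g : RawC n A₂ A₁)
    (h : RawC k A₂ A₁), P f → P g → P h → l3 f g (r • h) = r • l3 f g h
  skew2 : ∀ {m n : ℕ} (f : RawC m A₂ A₁) (g : RawC n A₂ A₁), P f → P g →
    l2 f g = ((-1 : ℤ)) ^ ((m + 1) * (n + 1) + 1) •
      castRaw (show n + m + 1 = m + n + 1 by omega) (l2 g f)
  skew3a : ∀ {m n k : ℕ} (f : RawC m A₂ A₁) (g : RawC n A₂ A₁) (h : RawC k A₂ A₁),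
    P f → P g → P h →
    l3 f g h = ((-1 : ℤ)) ^ ((m + 1) * (n + 1) + 1) •
      castRaw (show n + m + k + 1 = m + n + k + 1 by omega) (l3 g f h)
  skew3b : ∀ {m n k : ℕ} (f : RawC m A₂ A₁) (g : RawC n A₂ A₁) (h : RawC k A₂ A₁),
    P f → P g → P h →
    l3 f g h = ((-1 : ℤ)) ^ ((n + 1) * (k + 1) + 1) •
      castRaw (show m + k + n + 1 = m + n + k + 1 by omega) (l3 f h g)
  jac1 : ∀ {n : ℕ} (f : RawC n A₂ A₁), P f → l1 (l1 f) = 0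
  jac2 : ∀ {m n : ℕ} (f : RawC m A₂ A₁) (g : RawC n A₂ A₁), P f → P g →
    castRaw (show m + n + 1 + 1 = m + n + 2 by omega) (l1 (l2 f g))
      - castRaw (show m + 1 + n + 1 = m + n + 2 by omega) (l2 (l1 f) g)
      + ((-1 : ℤ)) ^ ((m + 1) * (n + 1)) •
          castRaw (show n + 1 + m + 1 = m + n + 2 by omega) (l2 (l1 g) f)
      = 0
  jac3 : ∀ {m n k : ℕ} (f : RawC m A₂ A₁) (g : RawC n A₂ A₁) (h : RawC k A₂ A₁),
    P f → P g → P h →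
    -(castRaw (show m + 1 + n + k + 1 = m + n + k + 2 by omega) (l3 (l1 f) g h))
      + ((-1 : ℤ)) ^ ((m + 1) * (n + 1)) •
          castRaw (show n + 1 + m + k + 1 = m + n + k + 2 by omega) (l3 (l1 g) f h)
      - ((-1 : ℤ)) ^ ((k + 1) * ((m + 1) + (n + 1))) •
          castRaw (show k + 1 + m + n + 1 = m + n + k + 2 by omega) (l3 (l1 h) f g)
      + castRaw (show m + n + 1 + k + 1 = m + n + k + 2 by omega) (l2 (l2 f g) h)
      - ((-1 : ℤ)) ^ ((n + 1) * (k + 1)) •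
          castRaw (show m + k + 1 + n + 1 = m + n + k + 2 by omega) (l2 (l2 f h) g)
      + ((-1 : ℤ)) ^ ((m + 1) * ((n + 1) + (k + 1))) •
          castRaw (show n + k + 1 + m + 1 = m + n + k + 2 by omega) (l2 (l2 g h) f)
      - castRaw (show m + n + k + 1 + 1 = m + n + k + 2 by omega) (l1 (l3 f g h))
      = 0
  jac4 : ∀ {m n k l : ℕ} (f : RawC m A₂ A₁) (g : RawC n A₂ A₁) (h : RawC k A₂ A₁)
    (e : RawC l A₂ A₁), P f → P g → P h → P e →
    castRaw (show m + n + 1 + k + l + 1 = m + n + k + l + 2 by omega) (l3 (l2 f g) h e)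
      - ((-1 : ℤ)) ^ ((n + 1) * (k + 1)) •
          castRaw (show m + k + 1 + n + l + 1 = m + n + k + l + 2 by omega)
            (l3 (l2 f h) g e)
      + ((-1 : ℤ)) ^ ((l + 1) * ((n + 1) + (k + 1))) •
          castRaw (show m + l + 1 + n + k + 1 = m + n + k + l + 2 by omega)
            (l3 (l2 f e) g h)
      + ((-1 : ℤ)) ^ ((m + 1) * ((n + 1) + (k + 1))) •
          castRaw (show n + k + 1 + m + l + 1 = m + n + k + l + 2 by omega)
            (l3 (l2 g h) f e)
      - ((-1 : ℤ)) ^ ((m + 1) * (n + 1) + (m + 1) * (l + 1) + (k + 1) * (l + 1)) •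
          castRaw (show n + l + 1 + m + k + 1 = m + n + k + l + 2 by omega)
            (l3 (l2 g e) f h)
      + ((-1 : ℤ)) ^ (((m + 1) + (n + 1)) * ((k + 1) + (l + 1))) •
          castRaw (show k + l + 1 + m + n + 1 = m + n + k + l + 2 by omega)
            (l3 (l2 h e) f g)
      - castRaw (show m + n + k + 1 + l + 1 = m + n + k + l + 2 by omega)
          (l2 (l3 f g h) e)
      + ((-1 : ℤ)) ^ ((k + 1) * (l + 1)) •
          castRaw (show m + n + l + 1 + k + 1 = m + n + k + l + 2 by omega)
            (l2 (l3 f g e) h)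
      - ((-1 : ℤ)) ^ ((n + 1) * ((k + 1) + (l + 1))) •
          castRaw (show m + k + l + 1 + n + 1 = m + n + k + l + 2 by omega)
            (l2 (l3 f h e) g)
      + ((-1 : ℤ)) ^ ((m + 1) * ((n + 1) + (k + 1) + (l + 1))) •
          castRaw (show n + k + l + 1 + m + 1 = m + n + k + l + 2 by omega)
            (l2 (l3 g h e) f)
      = 0
  jac5 : ∀ {a b c d e : ℕ} (x1 : RawC a A₂ A₁) (x2 : RawC b A₂ A₁) (x3 : RawC c A₂ A₁)
    (x4 : RawC d A₂ A₁) (x5 : RawC e A₂ A₁), P x1 → P x2 → P x3 → P x4 → P x5 →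
    castRaw (show a + b + c + 1 + d + e + 1 = a + b + c + d + e + 2 by omega)
        (l3 (l3 x1 x2 x3) x4 x5)
      - ((-1 : ℤ)) ^ ((c + 1) * (d + 1)) •
          castRaw (show a + b + d + 1 + c + e + 1 = a + b + c + d + e + 2 by omega)
            (l3 (l3 x1 x2 x4) x3 x5)
      + ((-1 : ℤ)) ^ ((e + 1) * ((c + 1) + (d + 1))) •
          castRaw (show a + b + e + 1 + c + d + 1 = a + b + c + d + e + 2 by omega)
            (l3 (l3 x1 x2 x5) x3 x4)
      + ((-1 : ℤ)) ^ ((b + 1) * ((c + 1) + (d + 1))) •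
          castRaw (show a + c + d + 1 + b + e + 1 = a + b + c + d + e + 2 by omega)
            (l3 (l3 x1 x3 x4) x2 x5)
      - ((-1 : ℤ)) ^ ((b + 1) * (c + 1) + (b + 1) * (e + 1) + (d + 1) * (e + 1)) •
          castRaw (show a + c + e + 1 + b + d + 1 = a + b + c + d + e + 2 by omega)
            (l3 (l3 x1 x3 x5) x2 x4)
      + ((-1 : ℤ)) ^ (((b + 1) + (c + 1)) * ((d + 1) + (e + 1))) •
          castRaw (show a + d + e + 1 + b + c + 1 = a + b + c + d + e + 2 by omega)
            (l3 (l3 x1 x4 x5) x2 x3)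
      - ((-1 : ℤ)) ^ ((a + 1) * ((b + 1) + (c + 1) + (d + 1))) •
          castRaw (show b + c + d + 1 + a + e + 1 = a + b + c + d + e + 2 by omega)
            (l3 (l3 x2 x3 x4) x1 x5)
      + ((-1 : ℤ)) ^ ((a + 1) * ((b + 1) + (c + 1) + (e + 1)) + (d + 1) * (e + 1)) •
          castRaw (show b + c + e + 1 + a + d + 1 = a + b + c + d + e + 2 by omega)
            (l3 (l3 x2 x3 x5) x1 x4)
      - ((-1 : ℤ)) ^ ((a + 1) * ((b + 1) + (d + 1) + (e + 1)) + (c + 1) * ((d + 1) + (e + 1))) •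
          castRaw (show b + d + e + 1 + a + c + 1 = a + b + c + d + e + 2 by omega)
            (l3 (l3 x2 x4 x5) x1 x3)
      + ((-1 : ℤ)) ^ (((a + 1) + (b + 1)) * ((c + 1) + (d + 1) + (e + 1))) •
          castRaw (show c + d + e + 1 + a + b + 1 = a + b + c + d + e + 2 by omega)
            (l3 (l3 x3 x4 x5) x1 x2)
      = 0

end GradedStructures

section TwistHom

variable {A₁ A₂ : Type*} [AddCommGroup A₁] [Module ℂ A₁] [AddCommGroup A₂] [Module ℂ A₂]

/-- `e^Ĥ = Id + Ĥ` as a linear endomorphism of `A₁ ⊕ A₂`. -/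
def eHp (H : A₂ →ₗ[ℂ] A₁) : (A₁ × A₂) →ₗ[ℂ] (A₁ × A₂) :=
  LinearMap.id + (LinearMap.inl ℂ A₁ A₂).comp (H.comp (LinearMap.snd ℂ A₁ A₂))

/-- `e^{-Ĥ} = Id - Ĥ` as a linear endomorphism of `A₁ ⊕ A₂`. -/
def eHm (H : A₂ →ₗ[ℂ] A₁) : (A₁ × A₂) →ₗ[ℂ] (A₁ × A₂) :=
  LinearMap.id - (LinearMap.inl ℂ A₁ A₂).comp (H.comp (LinearMap.snd ℂ A₁ A₂))

end TwistHom

end LCAF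

/-!
Write `Ĥ = (a, m) ↦ (T m, 0)` for the lift of `T`. For a 2-cochain `F` on `A ⊕ M` vanishing when
its first argument is `0`, the Nijenhuis–Richardson bracket with `Ĥ` is
`[F, Ĥ](x, y) = F(Ĥx, y) - F(Ĥy, x)|_{λ ↦ -λ-∂} - Ĥ F(x, y)`.
Applying this twice to `μ̂` and evaluating on `(m, n) ∈ M × M`, skew-symmetry of `[·_λ·]` and
`T ∂ = ∂ T` collapse `[T̂, T̂]_{μ̂}(m, n)` to `2 ([Tm_λ Tn] - T(ρ(Tm)_λ n - ρ(Tn)_{-λ-∂} m))`.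
-/

namespace LCAF

section Polynomials

variable {M N : Type*} [AddCommGroup M] [AddCommGroup N]

theorem renameV_id {k : ℕ} (p : MP k M) : renameV (fun j => j) p = p := by
  have h : (fun α : Fin k →₀ ℕ => Finsupp.mapDomain (fun j => j) α) = id :=
    funext fun _ => Finsupp.mapDomain_id
  rw [renameV, h, Finsupp.mapDomain_id]

theorem monMul_zero {k : ℕ} (p : MP k M) : monMul 0 p = p := by
  simp only [monMul, zero_add]
  exact Finsupp.mapDomain_id

variable [Module ℂ M] [Module ℂ N]

def mapCoeffL {k : ℕ} (g : M →ₗ[ℂ] N) : MP k M →ₗ[ℂ] MP k N :=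
  Finsupp.mapRange.linearMap g

@[simp]
theorem mapCoeffL_single {k : ℕ} (g : M →ₗ[ℂ] N) (α : Fin k →₀ ℕ) (m : M) :
    mapCoeffL g (Finsupp.single α m) = Finsupp.single α (g m) := by
  simp [mapCoeffL]

theorem mapCoeff_eq_mapCoeffL {k : ℕ} (g : M →ₗ[ℂ] N) (p : MP k M) :
    mapCoeff g p = mapCoeffL g p := rfl

abbrev lamMul : MP 1 M →ₗ[ℂ] MP 1 M :=
  Finsupp.lmapDomain M ℂ (lam1 + ·)

theorem lamMul_pow_single (n : ℕ) (m : M) :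
    (lamMul ^ n) (Finsupp.single 0 m) = Finsupp.single (n • lam1) m := by
  induction n with
  | zero => simp
  | succ n ih =>
    rw [pow_succ', Module.End.mul_apply, ih, Finsupp.lmapDomain_apply,
      Finsupp.mapDomain_single, succ_nsmul, add_comm]

theorem smul_lam1 (α : Fin 1 →₀ ℕ) : α 0 • lam1 = α := by
  ext
  simp [lam1, Fin.default_eq_zero]

def negLamD (D : M →ₗ[ℂ] M) : MP 1 M →ₗ[ℂ] MP 1 M :=
  -(lamMul + mapCoeffL D)

def sub1L (D : M →ₗ[ℂ] M) : MP 1 M →ₗ[ℂ] MP 1 M :=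
  Finsupp.lsum ℂ fun α => (negLamD D ^ α 0) ∘ₗ Finsupp.lsingle 0

theorem sub1L_single (D : M →ₗ[ℂ] M) (α : Fin 1 →₀ ℕ) (m : M) :
    sub1L D (Finsupp.single α m) = (negLamD D ^ α 0) (Finsupp.single 0 m) := by
  simp [sub1L]

theorem substFun_one (D : M →ₗ[ℂ] M) (q : Fin 1 → MP 1 ℂ) (c : Fin 1 → ℂ) (p : MP 1 M) :
    substFun D q c p = p.sum fun α m => (opnd D (q 0) (c 0))^[α 0] (Finsupp.single 0 m) := by
  simp [substFun]

theorem scaleP_smul_Xv_zero (r : ℂ) (p : MP 1 M) :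
    scaleP (r • Xv 0) p = r • lamMul p := by
  simp [scaleP, Xv, Finsupp.sum_single_index, lam1, monMul]

theorem substFun_Xv_zero (D : M →ₗ[ℂ] M) (p : MP 1 M) :
    substFun D (fun _ => Xv 0) (fun _ => 0) p = p := by
  have hop : opnd D (Xv 0) 0 = ⇑(lamMul (M := M)) := by
    funext p
    simpa [opnd] using scaleP_smul_Xv_zero 1 p
  rw [substFun_one]
  conv_rhs => rw [← Finsupp.sum_single p]
  refine Finsupp.sum_congr fun α _ => ?_
  rw [hop, ← Module.End.pow_apply, lamMul_pow_single, smul_lam1]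

theorem sub1_eq_sub1L (D : M →ₗ[ℂ] M) (p : MP 1 M) : sub1 D p = sub1L D p := by
  have hop : opnd D (-(Xv 0)) (-1) = ⇑(negLamD D) := by
    funext p
    have h := scaleP_smul_Xv_zero (-1) p
    simp only [neg_one_smul] at h
    simp only [opnd, h, negLamD, neg_one_smul, LinearMap.neg_apply, LinearMap.add_apply,
      mapCoeff_eq_mapCoeffL]
    abel
  rw [sub1, substFun_one, sub1L, Finsupp.lsum_apply]
  refine Finsupp.sum_congr fun α _ => ?_
  simp [hop, Module.End.pow_apply]

theorem mapCoeffL_comp_sub1L (T : M →ₗ[ℂ] N) (DM : M →ₗ[ℂ] M) (DN : N →ₗ[ℂ] N)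
    (hT : ∀ m, T (DM m) = DN (T m)) :
    mapCoeffL T ∘ₗ sub1L DM = sub1L DN ∘ₗ mapCoeffL T := by
  have hneg : (negLamD DN).comp (mapCoeffL T) = (mapCoeffL T).comp (negLamD DM) := by
    ext α m : 2
    simp [negLamD, hT]
  ext α m : 2
  simp only [LinearMap.comp_apply, Finsupp.lsingle_apply, sub1L_single, mapCoeffL_single]
  rw [← mapCoeffL_single, ← LinearMap.comp_apply, ← LinearMap.comp_apply,
    ← Module.End.commute_pow_left_of_commute hneg]

theorem mapCoeffL_sub1L (T : M →ₗ[ℂ] N) (DM : M →ₗ[ℂ] M) (DN : N →ₗ[ℂ] N)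
    (hT : ∀ m, T (DM m) = DN (T m)) (p : MP 1 M) :
    mapCoeffL T (sub1L DM p) = sub1L DN (mapCoeffL T p) :=
  LinearMap.congr_fun (mapCoeffL_comp_sub1L T DM DN hT) p

theorem sub1L_comp_negLamD (D : M →ₗ[ℂ] M) : sub1L D ∘ₗ negLamD D = lamMul ∘ₗ sub1L D := by
  have hlam : sub1L D ∘ₗ lamMul = negLamD D ∘ₗ sub1L D := by
    ext α m : 2
    have h : (lam1 + α) 0 = α 0 + 1 := by simp [lam1, add_comm]
    simp [sub1L_single, h, pow_succ']
  have hD := mapCoeffL_comp_sub1L D D D fun _ => rfl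
  simp only [negLamD, LinearMap.comp_neg, LinearMap.comp_add, hlam, ← hD, LinearMap.neg_comp,
    LinearMap.add_comp]
  abel

theorem sub1L_sub1L (D : M →ₗ[ℂ] M) (p : MP 1 M) : sub1L D (sub1L D p) = p := by
  suffices h : sub1L D ∘ₗ sub1L D = LinearMap.id from LinearMap.congr_fun h p
  ext α m : 2
  simp only [LinearMap.comp_apply, Finsupp.lsingle_apply, sub1L_single, LinearMap.id_apply]
  rw [← LinearMap.comp_apply,
    ← Module.End.commute_pow_left_of_commute (sub1L_comp_negLamD D).symm]
  simp [sub1L_single, lamMul_pow_single, smul_lam1]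

end Polynomials

section NijenhuisRichardson

variable {X : Type*} [AddCommGroup X] [Module ℂ X]

def linCochain (H : X →ₗ[ℂ] X) : RawC 0 X X :=
  fun v => Finsupp.single 0 (H (v 0))

theorem exprQ_zero : exprQ (0 : Fin 2) = Xv 0 := by
  simp [exprQ]

theorem exprQ_one : exprQ (1 : Fin 2) = -Xv 0 := by
  simp [exprQ, Fin.last]

theorem exprC_zero : exprC (0 : Fin 2) = 0 := by
  simp [exprC]

theorem exprC_one : exprC (1 : Fin 2) = -1 := by
  simp [exprC, Fin.last]

theorem cons_eq_vec_two {α : Type*} (x : α) (g : Fin 1 → α) :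
    (Fin.cons x g : Fin 2 → α) = ![x, g 0] := by
  ext i
  fin_cases i <;> rfl

theorem perm_fin_two_univ :
    (Finset.univ : Finset (Equiv.Perm (Fin 2))) = {1, Equiv.swap 0 1} := by
  decide

theorem diamond_linCochain (DX H : X →ₗ[ℂ] X) (F : RawC 1 X X)
    (hF : ∀ y, F ![0, y] = 0) (a : Fin 2 → X) :
    diamond DX F (linCochain H) a =
      F ![H (a 0), a 1] - sub1 DX (F ![H (a 1), a 0]) := by
  have hunsh : ∀ σ : Equiv.Perm (Fin 2), IsUnsh 1 σ := fun σ i j hij _ => by omega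
  simp only [diamond, Finset.filter_true_of_mem fun σ _ => hunsh σ]
  rw [perm_fin_two_univ, Finset.sum_insert (by decide), Finset.sum_singleton]
  simp only [Nat.add_zero, Nat.reduceAdd, Equiv.Perm.sign_one, Units.val_one, Fin.val_eq_zero,
    ↓reduceIte, Finset.univ_unique, Fin.default_eq_zero, Fin.isValue, Equiv.Perm.coe_one, id_eq,
    Finset.sum_singleton, Fin.castLE_zero, linCochain, Fin.cast_eq_self, Fin.natAdd_zero,
    Fin.natAdd_eq_addNat, Fin.addNat_one, cons_eq_vec_two, Nat.succ_eq_add_one,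
    Fin.succ_zero_eq_one, one_smul, Equiv.Perm.sign_swap', zero_ne_one, Units.val_neg,
    Int.reduceNeg, Equiv.swap_apply_left, Equiv.swap_apply_right, neg_smul]
  -- `⋄` is a `Finsupp.sum` over the coefficients of `linCochain H`; `hF` covers a zero one
  rw [Finsupp.sum_single_index (by simp [hF, renameV, monMul]),
    Finsupp.sum_single_index (by simp [hF, renameV, monMul])]
  simp [renameV_id, monMul_zero, exprQ_zero, exprC_zero, exprQ_one, exprC_one, substFun_Xv_zero,
    sub1, sub_eq_add_neg]

theorem linCochain_diamond (DX H : X →ₗ[ℂ] X) (F : RawC 1 X X) (a : Fin 2 → X) :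
    diamond DX (linCochain H) F a = mapCoeffL H (F a) := by
  have hunsh : ∀ σ : Equiv.Perm (Fin 2), IsUnsh 2 σ ↔ σ = 1 := by
    unfold IsUnsh
    decide
  simp only [diamond, hunsh, Finset.filter_eq', Finset.mem_univ, if_true, Finset.sum_singleton]
  simp only [Nat.reduceAdd, Equiv.Perm.sign_one, Units.val_one, Fin.fin_one_eq_zero, Fin.isValue,
    Fin.val_eq_zero, zero_ne_one, ↓reduceIte, Fin.castSucc_zero, Equiv.Perm.coe_one, id_eq,
    exprQ_zero, exprC_zero, Fin.castLE_refl, monMul, Nat.add_zero, renameV, linCochain,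
    Fin.cast_eq_self, Fin.cons_zero, Finsupp.mapDomain_single, Finsupp.mapDomain_zero, add_zero,
    substFun_Xv_zero, one_smul]
  rw [mapCoeffL, Finsupp.mapRange.linearMap_apply, ← Finsupp.sum_single (Finsupp.mapRange _ _ _),
    Finsupp.sum_mapRange_index (by simp)]
  have hid : (fun _ : Fin 1 => (0 : Fin 1)) = id :=
    funext fun i => (Fin.fin_one_eq_zero i).symm
  simp only [hid, Finsupp.mapDomain_id]

theorem nr_linCochain_apply (DX H : X →ₗ[ℂ] X) (F : RawC 1 X X)
    (hF : ∀ y, F ![0, y] = 0) (a : Fin 2 → X) :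
    nr DX F (linCochain H) a =
      F ![H (a 0), a 1] - sub1L DX (F ![H (a 1), a 0]) - mapCoeffL H (F a) := by
  rw [← sub1_eq_sub1L, ← diamond_linCochain DX H F hF, ← linCochain_diamond DX H F]
  simp [nr, castRaw]

end NijenhuisRichardson

section SemidirectProduct

variable {A M : Type*} [AddCommGroup A] [AddCommGroup M]

theorem fst_pairP {k : ℕ} (p : MP k A) (q : MP k M) :
    Finsupp.mapRange Prod.fst rfl (pairP p q) = p := by
  ext
  simp [pairP]

variable [Module ℂ M]

theorem toC2_sdBr_apply (br : A → A → MP 1 A) (DM : M →ₗ[ℂ] M) (rho : A → M → MP 1 M)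
    (x y : A × M) :
    toC2 (sdBr br DM rho fun _ _ => 0) ![x, y] =
      pairP (br x.1 y.1) (rho x.1 y.2 - sub1L DM (rho y.1 x.2)) := by
  simp [toC2, sdBr, sub1_eq_sub1L]

variable [Module ℂ A]

theorem pairP_eq (p : MP 1 A) (q : MP 1 M) :
    pairP p q = mapCoeffL (LinearMap.inl ℂ A M) p + mapCoeffL (LinearMap.inr ℂ A M) q := by
  refine Finsupp.ext fun γ => ?_
  simp [pairP, mapCoeffL]

theorem pairP_sub (p p' : MP 1 A) (q q' : MP 1 M) :
    pairP p q - pairP p' q' = pairP (p - p') (q - q') := by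
  simp only [pairP_eq, map_sub]
  abel

theorem pairP_zero : pairP (0 : MP 1 A) (0 : MP 1 M) = 0 := by
  simp [pairP_eq]

theorem sub1L_pairP (D : A →ₗ[ℂ] A) (DM : M →ₗ[ℂ] M) (p : MP 1 A) (q : MP 1 M) :
    sub1L (D.prodMap DM) (pairP p q) = pairP (sub1L D p) (sub1L DM q) := by
  simp only [pairP_eq, map_add]
  rw [mapCoeffL_sub1L _ D (D.prodMap DM) (fun _ => by simp),
    mapCoeffL_sub1L _ DM (D.prodMap DM) (fun _ => by simp)]

abbrev hatLin (T : M →ₗ[ℂ] A) : A × M →ₗ[ℂ] A × M :=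
  LinearMap.inl ℂ A M ∘ₗ T ∘ₗ LinearMap.snd ℂ A M

theorem mapCoeffL_hatLin_pairP (T : M →ₗ[ℂ] A) (p : MP 1 A) (q : MP 1 M) :
    mapCoeffL (hatLin T) (pairP p q) = pairP (mapCoeffL T q) 0 := by
  refine Finsupp.ext fun γ => ?_
  simp [pairP, mapCoeffL]

theorem liftC_hatC1 (T : M →ₗ[ℂ] A) : liftC (hatC1 T) = linCochain (hatLin T) := by
  funext v
  simp [liftC, hatC1, linCochain]

end SemidirectProduct

section RotaBaxter

variable {A M : Type*} [AddCommGroup A] [Module ℂ A] [AddCommGroup M] [Module ℂ M]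
  {D : A →ₗ[ℂ] A} {br : A → A → MP 1 A} {DM : M →ₗ[ℂ] M} {rho : A → M → MP 1 M}

theorem IsLCA.br_zero_left (hL : IsLCA D br) (a : A) : br 0 a = 0 := by
  simpa using hL.smul_left 0 0 a

theorem IsLCA.br_zero_right (hL : IsLCA D br) (a : A) : br a 0 = 0 := by
  simpa using hL.smul_right 0 a 0

theorem IsLCA.skew_sub1L (hL : IsLCA D br) (a b : A) : br a b = -sub1L D (br b a) := by
  rw [hL.skew, sub1_eq_sub1L]

theorem IsLCAMod.rho_zero_left (hM : IsLCAMod D br DM rho) (m : M) : rho 0 m = 0 := by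
  simpa using hM.smul_left 0 0 m

theorem IsLCAMod.rho_zero_right (hM : IsLCAMod D br DM rho) (a : A) : rho a 0 = 0 := by
  simpa using hM.smul_right 0 a 0

theorem nr_sdBr_hatLin_apply (hL : IsLCA D br) (hM : IsLCAMod D br DM rho) (T : M →ₗ[ℂ] A)
    (a b : A) (m n : M) :
    nr (D.prodMap DM) (toC2 (sdBr br DM rho fun _ _ => 0)) (linCochain (hatLin T))
        ![(a, m), (b, n)] =
      pairP (br (T m) b - sub1L D (br (T n) a) - mapCoeffL T (rho a n - sub1L DM (rho b m)))
        (rho (T m) n - sub1L DM (rho (T n) m)) := by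
  have hzero : ∀ y, toC2 (sdBr br DM rho fun _ _ => 0) ![0, y] = 0 := fun y => by
    simp [toC2_sdBr_apply, hL.br_zero_left, hM.rho_zero_left, hM.rho_zero_right, pairP_zero]
  rw [nr_linCochain_apply _ _ _ hzero]
  simp [toC2_sdBr_apply, hM.rho_zero_right, sub1L_pairP, mapCoeffL_hatLin_pairP, pairP_sub]

theorem ell2_hatC1_apply (hL : IsLCA D br) (hM : IsLCAMod D br DM rho) (T : M →ₗ[ℂ] A)
    (hT : ∀ m, T (DM m) = D (T m)) (v : Fin 2 → M) :
    ell2 (D.prodMap DM) (toC2 (sdBr br DM rho fun _ _ => 0)) (hatC1 T) (hatC1 T) v =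
      (2 : ℂ) • (br (T (v 0)) (T (v 1)) -
        mapCoeffL T (rho (T (v 0)) (v 1) - sub1L DM (rho (T (v 1)) (v 0)))) := by
  have hzero : ∀ y, nr (D.prodMap DM) (toC2 (sdBr br DM rho fun _ _ => 0))
      (linCochain (hatLin T)) ![0, y] = 0 := fun y => by
    rw [← Prod.mk_zero_zero, nr_sdBr_hatLin_apply hL hM]
    simp [hL.br_zero_left, hL.br_zero_right, hM.rho_zero_left, hM.rho_zero_right, pairP_zero]
  have hv : (fun i => ((0 : A), v i)) = ![(0, v 0), (0, v 1)] := by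
    ext i : 1
    fin_cases i <;> rfl
  simp only [ell2, liftC_hatC1, pow_zero, one_smul, downC, castRaw]
  rw [hv, nr_linCochain_apply _ _ _ hzero]
  simp only [Matrix.cons_val_zero, Matrix.cons_val_one, LinearMap.comp_apply,
    LinearMap.snd_apply, LinearMap.inl_apply]
  simp only [nr_sdBr_hatLin_apply hL hM, hL.br_zero_left, hL.br_zero_right, hM.rho_zero_left,
    hM.rho_zero_right, map_zero, sub_zero, zero_sub]
  rw [sub1L_pairP, mapCoeffL_hatLin_pairP, pairP_sub, pairP_sub, fst_pairP,
    ← hL.skew_sub1L, map_sub, map_neg, sub1L_sub1L, ← mapCoeffL_sub1L T DM D hT, map_sub,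
    two_smul]
  abel

end RotaBaxter

/-- `T : M → A` is a relative Rota–Baxter operator iff its lift
`T̂` satisfies the Maurer–Cartan equation `[T̂,T̂]_{μ̂} = 0` in the graded Lie
algebra `(C^*(M,A), [·,·]_{μ̂})` of the semidirect product `A ⋉_ρ M`. -/
theorem statement10 {A M : Type*} [AddCommGroup A] [Module ℂ A]
    [AddCommGroup M] [Module ℂ M]
    (D : A →ₗ[ℂ] A) (br : A → A → MP 1 A) (hL : IsLCA D br)
    (DM : M →ₗ[ℂ] M) (rho : A → M → MP 1 M) (hM : IsLCAMod D br DM rho)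
    (T : M →ₗ[ℂ] A) (hT : ∀ m : M, T (DM m) = D (T m)) :
    IsRB br DM rho T ↔
      ell2 (D.prodMap DM) (toC2 (sdBr br DM rho (fun _ _ => 0)))
        (hatC1 T) (hatC1 T) = 0 := by
  have hRB : IsRB br DM rho T ↔ ∀ m n : M,
      br (T m) (T n) - mapCoeffL T (rho (T m) n - sub1L DM (rho (T n) m)) = 0 := by
    simp only [IsRB, sub_eq_zero, mapCoeff_eq_mapCoeffL, sub1_eq_sub1L]
  rw [hRB, funext_iff]
  simp only [ell2_hatC1_apply hL hM T hT, Pi.zero_apply, smul_eq_zero, two_ne_zero, false_or]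
  exact ⟨fun h v => h (v 0) (v 1), fun h m n => h ![m, n]⟩

end LCAF
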